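/- arXiv:2301.02335 — 2 statements merged into one kernel-verified Lean document; each statement's English description precedes it below -/
import Mathlib

section
/- Let $\mathfrak{g}=\mathfrak{g}_1\oplus\cdots\oplus\mathfrak{g}_s$ be a direct sum of ideals and $\mathfrak{k}_j\subset\mathfrak{k}\subset\mathfrak{g}$ subalgebras satisfying the alignment condition $B_{\mathfrak{g}_i}(Z_i,W_i)=\tfrac{1}{c_i}B_{\mathfrak{g}}(Z,W)$ for all $Z,W\in\mathfrak{k}$, with constants $c_i>0$. Suppose the Killing constants $c_{ij}$ are defined by $B_{\pi_i(\mathfrak{k}_j)}=c_{ij}\,B_{\mathfrak{g}_i}|_{\pi_i(\mathfrak{k}_j)\times\pi_i(\mathfrak{k}_j)}$, and that the Killing form of $\mathfrak{k}$ restricted to $\mathfrak{k}_j$ equals the Killing form of $\mathfrak{k}_j$, with $\pi_i|_{\mathfrak{k}_j}$ an isomorphism onto its image. Then $B_{\mathfrak{k}_j}(Z,W)=\tfrac{c_{ij}}{c_i}B_{\mathfrak{g}}(Z,W)$ for all $Z,W\in\mathfrak{k}_j$ and all $i$; in particular the ratio $c_{ij}/c_i$ is independent of $i$, i.e., $(c_{1j},\dots,c_{sj})=\lambda_j(c_1,\dots,c_s)$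 for some $\lambda_j>0$ whenever $B_{\mathfrak{k}_j}\neq 0$. -/
/-!
Since `πᵢ` is injective on `k_j`, it is a Lie isomorphism `k_j ≃ πᵢ(k_j)`, and Killing forms are
invariant under isomorphisms. Hence `B_{k_j}(Z, W) = B_{πᵢ(k_j)}(Zᵢ, Wᵢ) = c_{ij} B_{gᵢ}(Zᵢ, Wᵢ)`,
which the alignment condition turns into `(c_{ij} / cᵢ) B_g(Z, W)`. A single pair with
`B_{k_j}(Z, W) ≠ 0` then forces all ratios `c_{ij} / cᵢ` to coincide.
-/

open DirectSum

section KillingForm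

variable {R L L' : Type*} [CommRing R] [LieRing L] [LieAlgebra R L] [LieRing L'] [LieAlgebra R L']

lemma LieSubalgebra.range_comp_incl (K : LieSubalgebra R L) (f : L →ₗ⁅R⁆ L') :
    (f.comp K.incl).range = K.map f := by
  ext x
  constructor
  · rintro ⟨y, rfl⟩
    exact ⟨y, y.2, rfl⟩
  · rintro ⟨y, hy, rfl⟩
    exact ⟨⟨y, hy⟩, rfl⟩

noncomputable def LieSubalgebra.equivMapOfInjOn (K : LieSubalgebra R L) (f : L →ₗ⁅R⁆ L')
    (hf : Set.InjOn f K) : K ≃ₗ⁅R⁆ K.map f :=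
  ((f.comp K.incl).equivRangeOfInjective fun x y hxy => Subtype.ext (hf x.2 y.2 hxy)).trans
    (LieEquiv.ofEq _ _ (by rw [K.range_comp_incl f]))

lemma LieSubalgebra.killingForm_map_of_injOn (K : LieSubalgebra R L) (f : L →ₗ⁅R⁆ L')
    (hf : Set.InjOn f K) (x y : K) :
    killingForm R (K.map f) ⟨f x, x, x.2, rfl⟩ ⟨f y, y, y.2, rfl⟩ = killingForm R K x y :=
  LieAlgebra.killingForm_of_equiv_apply (K.equivMapOfInjOn f hf) x y

end KillingForm

theorem exists_pos_eq_mul_of_forall_eq_div_mul {ι : Type*} (c d : ι → ℝ) (hc : ∀ i, 0 < c i)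
    (hd : ∀ i, 0 < d i) {a b : ℝ} (hb : b ≠ 0) (h : ∀ i, b = d i / c i * a) :
    ∃ lam : ℝ, 0 < lam ∧ ∀ i, d i = lam * c i := by
  rcases isEmpty_or_nonempty ι with hι | ⟨⟨i₀⟩⟩
  · exact ⟨1, one_pos, hι.elim⟩
  · have ha : a ≠ 0 := by
      rintro rfl
      exact hb (by simpa using h i₀)
    refine ⟨d i₀ / c i₀, div_pos (hd i₀) (hc i₀), fun i => ?_⟩
    rw [mul_right_cancel₀ ha ((h i₀).symm.trans (h i)), div_mul_cancel₀ _ (hc i).ne']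

theorem aligned_killing_constants_general
    (ι : Type*) [DecidableEq ι]
    (g : ι → Type*) [∀ i, LieRing (g i)] [∀ i, LieAlgebra ℝ (g i)]
    (k kj : LieSubalgebra ℝ (⨁ i, g i)) (hle : kj ≤ k)
    (c : ι → ℝ) (hc : ∀ i, 0 < c i)
    (halign : ∀ i, ∀ Z ∈ k, ∀ W ∈ k,
      killingForm ℝ (g i) (DirectSum.lieAlgebraComponent ℝ ι g i Z)
          (DirectSum.lieAlgebraComponent ℝ ι g i W) =
        (1 / c i) * killingForm ℝ (⨁ i, g i) Z W)
    (cij : ι → ℝ) (hcij_pos : ∀ i, 0 < cij i)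
    -- the Killing constants: `B_{π_i(k_j)} = c_{ij} B_{g_i}` on `π_i(k_j)`
    (hcij : ∀ i, ∀ Z W : (kj.map (DirectSum.lieAlgebraComponent ℝ ι g i)),
      killingForm ℝ (kj.map (DirectSum.lieAlgebraComponent ℝ ι g i)) Z W =
        cij i * killingForm ℝ (g i) (Z : g i) (W : g i))
    -- each projection `π_i` is injective on `k_j` (isomorphism onto its image)
    (hinj : ∀ i, ∀ Z ∈ kj, DirectSum.lieAlgebraComponent ℝ ι g i Z = 0 → Z = 0) :
    (∀ i, ∀ Z W : kj, killingForm ℝ kj Z W =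
        (cij i / c i) * killingForm ℝ (⨁ i, g i) (Z : ⨁ i, g i) (W : ⨁ i, g i)) ∧
      ((∃ Z W : kj, killingForm ℝ kj Z W ≠ 0) →
        ∃ lam : ℝ, 0 < lam ∧ ∀ i, cij i = lam * c i) := by
  have key : ∀ i, ∀ Z W : kj, killingForm ℝ kj Z W =
      (cij i / c i) * killingForm ℝ (⨁ i, g i) (Z : ⨁ i, g i) (W : ⨁ i, g i) := by
    intro i Z W
    set π := DirectSum.lieAlgebraComponent ℝ ι g i
    have hπ : Set.InjOn π kj :=
      LinearMap.disjoint_ker_iff_injOn.mp (LinearMap.disjoint_ker.mpr (hinj i))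
    calc killingForm ℝ kj Z W
        = killingForm ℝ (kj.map π) ⟨π Z, Z, Z.2, rfl⟩ ⟨π W, W, W.2, rfl⟩ :=
          (kj.killingForm_map_of_injOn π hπ Z W).symm
      _ = cij i * killingForm ℝ (g i) (π Z) (π W) := hcij i _ _
      _ = cij i * (1 / c i * killingForm ℝ (⨁ i, g i) Z W) := by
          rw [halign i _ (hle Z.2) _ (hle W.2)]
      _ = _ := by ring
  refine ⟨key, ?_⟩
  rintro ⟨Z, W, hne⟩
  exact exists_pos_eq_mul_of_forall_eq_div_mul c cij hc hcij_pos hne (key · Z W)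

/-- For an aligned subalgebra `k` of a direct sum of Lie algebras with alignment
constants `cᵢ`, and a factor `k_j ⊆ k` with Killing constants `c_{ij}`, one has
`B_{k_j}(Z,W) = (c_{ij}/cᵢ) B_g(Z,W)`; in particular the ratios `c_{ij}/cᵢ` are
independent of `i`, i.e. `(c_{1j},…,c_{sj}) = λ_j (c_1,…,c_s)` with `λ_j > 0`,
whenever `B_{k_j} ≠ 0`. -/
theorem aligned_killing_constants
    (ι : Type*) [Fintype ι] [DecidableEq ι]
    (g : ι → Type*) [∀ i, LieRing (g i)] [∀ i, LieAlgebra ℝ (g i)]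
    [∀ i, Module.Finite ℝ (g i)]
    (k kj : LieSubalgebra ℝ (⨁ i, g i)) (hle : kj ≤ k)
    (c : ι → ℝ) (hc : ∀ i, 0 < c i)
    (halign : ∀ i, ∀ Z ∈ k, ∀ W ∈ k,
      killingForm ℝ (g i) (DirectSum.lieAlgebraComponent ℝ ι g i Z)
          (DirectSum.lieAlgebraComponent ℝ ι g i W) =
        (1 / c i) * killingForm ℝ (⨁ i, g i) Z W)
    (cij : ι → ℝ) (hcij_pos : ∀ i, 0 < cij i)
    -- the Killing constants: `B_{π_i(k_j)} = c_{ij} B_{g_i}` on `π_i(k_j)`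
    (hcij : ∀ i, ∀ Z W : (kj.map (DirectSum.lieAlgebraComponent ℝ ι g i)),
      killingForm ℝ (kj.map (DirectSum.lieAlgebraComponent ℝ ι g i)) Z W =
        cij i * killingForm ℝ (g i) (Z : g i) (W : g i))
    -- the Killing form of `k` restricted to `k_j` equals that of `k_j`
    (hrestr : ∀ Z W : kj, killingForm ℝ kj Z W =
        killingForm ℝ k ⟨(Z : ⨁ i, g i), hle Z.2⟩ ⟨(W : ⨁ i, g i), hle W.2⟩)
    -- each projection `π_i` is injective on `k_j` (isomorphism onto its image)
    (hinj : ∀ i, ∀ Z ∈ kj, DirectSum.lieAlgebraComponent ℝ ι g i Z = 0 → Z = 0) :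
    (∀ i, ∀ Z W : kj, killingForm ℝ kj Z W =
        (cij i / c i) * killingForm ℝ (⨁ i, g i) (Z : ⨁ i, g i) (W : ⨁ i, g i)) ∧
      ((∃ Z W : kj, killingForm ℝ kj Z W ≠ 0) →
        ∃ lam : ℝ, 0 < lam ∧ ∀ i, cij i = lam * c i) :=
  aligned_killing_constants_general ι g k kj hle c hc halign cij hcij_pos hcij hinj
end

section
/- Let $n\geq 1$ and let $x_1\le x_2\le\cdots\le x_n$ be positive reals. Suppose nonnegative reals $a_{ij}^k$ (for $1\le i,j,k\le n$) satisfy, for each $k$ with $\sum_{i,j}a_{ij}^k/(x_ix_j)>0$, the equation $\sum_{i,j}a_{ij}^k\tfrac{(x_i-x_j)^2}{x_ix_j}=(x_k^2-1)\sum_{i,j}a_{ij}^k\tfrac{1}{x_ix_j}$, and suppose this holds for every $k$ (with all the sums positive). Then $x_1=x_2=\cdots=x_n=1$. -/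
/-!
Dividing the `k`-th equation by its positive weight shows that `x_k ^ 2 - 1` is a weighted
average of the numbers `(x_i - x_j) ^ 2`, so `0 ≤ x_k ^ 2 - 1 ≤ (max x - min x) ^ 2`. The lower
bound gives `1 ≤ x_k` for all `k`; the upper bound at the index of `max x` gives
`2 max x · min x ≤ (min x) ^ 2 + 1 ≤ 2 (min x) ^ 2`, so `max x ≤ min x ≤ 1`.
-/

namespace Finset

variable {ι : Type*} {s : Finset ι} {w f : ι → ℝ} {c : ℝ}

theorem le_of_le_of_sum_mul_eq_mul_sum {m : ℝ} (hw : ∀ i ∈ s, 0 ≤ w i)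
    (hpos : 0 < ∑ i ∈ s, w i) (h : ∑ i ∈ s, w i * f i = c * ∑ i ∈ s, w i)
    (hm : ∀ i ∈ s, m ≤ f i) : m ≤ c := by
  refine le_of_mul_le_mul_right ?_ hpos
  calc m * ∑ i ∈ s, w i = ∑ i ∈ s, w i * m := by rw [mul_sum]; simp only [mul_comm]
    _ ≤ ∑ i ∈ s, w i * f i := sum_le_sum fun i hi => mul_le_mul_of_nonneg_left (hm i hi) (hw i hi)
    _ = c * ∑ i ∈ s, w i := h

theorem le_of_sum_mul_eq_mul_sum_of_le {M : ℝ} (hw : ∀ i ∈ s, 0 ≤ w i)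
    (hpos : 0 < ∑ i ∈ s, w i) (h : ∑ i ∈ s, w i * f i = c * ∑ i ∈ s, w i)
    (hM : ∀ i ∈ s, f i ≤ M) : c ≤ M := by
  refine le_of_mul_le_mul_right ?_ hpos
  calc c * ∑ i ∈ s, w i = ∑ i ∈ s, w i * f i := h.symm
    _ ≤ ∑ i ∈ s, w i * M := sum_le_sum fun i hi => mul_le_mul_of_nonneg_left (hM i hi) (hw i hi)
    _ = M * ∑ i ∈ s, w i := by rw [mul_sum]; simp only [mul_comm]

end Finset

theorem all_eq_one_of_convex_combination_general
    (n : ℕ)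
    (x : Fin n → ℝ) (hx : ∀ i, 0 < x i)
    (a : Fin n → Fin n → Fin n → ℝ) (ha : ∀ i j k, 0 ≤ a i j k)
    (hpos : ∀ k, 0 < ∑ i, ∑ j, a i j k / (x i * x j))
    (heq : ∀ k, ∑ i, ∑ j, a i j k * ((x i - x j) ^ 2 / (x i * x j)) =
      (x k ^ 2 - 1) * ∑ i, ∑ j, a i j k / (x i * x j)) :
    ∀ k, x k = 1 := by
  intro k
  set w : Fin n → Fin n × Fin n → ℝ := fun l p => a p.1 p.2 l / (x p.1 * x p.2)
  have hw : ∀ l, ∀ p ∈ Finset.univ, 0 ≤ w l p := fun l p _ =>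
    div_nonneg (ha _ _ _) (mul_pos (hx _) (hx _)).le
  have hwpos : ∀ l, 0 < ∑ p, w l p := fun l => by
    simpa only [w, Fintype.sum_prod_type] using hpos l
  have hmean : ∀ l, ∑ p, w l p * (x p.1 - x p.2) ^ 2 = (x l ^ 2 - 1) * ∑ p, w l p := fun l => by
    simpa only [w, Fintype.sum_prod_type, div_mul_eq_mul_div, mul_div_assoc] using heq l
  have hone : ∀ l, 1 ≤ x l := fun l => by
    have := Finset.le_of_le_of_sum_mul_eq_mul_sum (hw l) (hwpos l) (hmean l)
      fun p _ => sq_nonneg (x p.1 - x p.2)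
    nlinarith [hx l]
  have : Nonempty (Fin n) := ⟨k⟩
  obtain ⟨lo, hlo⟩ := Finite.exists_min x
  obtain ⟨hi, hhi⟩ := Finite.exists_max x
  have hspread : x hi ^ 2 - 1 ≤ (x hi - x lo) ^ 2 :=
    Finset.le_of_sum_mul_eq_mul_sum_of_le (hw hi) (hwpos hi) (hmean hi) fun p _ =>
      sq_le_sq' (by linarith [hlo p.1, hhi p.2]) (by linarith [hhi p.1, hlo p.2])
  have hmax : x hi ≤ 1 := by nlinarith [hone lo, hlo hi]
  linarith [hone k, hhi k]

/-- Key algebraic lemma: if positive reals `x_1 ≤ … ≤ x_n` satisfy, for every `k`,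
`∑_{i,j} a_{ij}^k (x_i - x_j)²/(x_i x_j) = (x_k² - 1) ∑_{i,j} a_{ij}^k/(x_i x_j)`
with nonnegative weights `a_{ij}^k` whose weighted sums are positive, then all
`x_k = 1`. -/
theorem all_eq_one_of_convex_combination
    (n : ℕ) (hn : 1 ≤ n)
    (x : Fin n → ℝ) (hx : ∀ i, 0 < x i)
    (hmono : ∀ i j : Fin n, i ≤ j → x i ≤ x j)
    (a : Fin n → Fin n → Fin n → ℝ) (ha : ∀ i j k, 0 ≤ a i j k)
    (hpos : ∀ k, 0 < ∑ i, ∑ j, a i j k / (x i * x j))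
    (heq : ∀ k, ∑ i, ∑ j, a i j k * ((x i - x j) ^ 2 / (x i * x j)) =
      (x k ^ 2 - 1) * ∑ i, ∑ j, a i j k / (x i * x j)) :
    ∀ k, x k = 1 :=
  all_eq_one_of_convex_combination_general n x hx a ha hpos heq
end
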